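/- For every a > 0, (1/π) · ∫₀¹ (1 + a²u)^{-1} · ₂F₁(1/2, 1/2; 1; a²u/(1 + a²u)) · (u(1-u))^{-1/2} du = (1 + a²)^{-1/2} · ₂F₁(1/4, 1/4; 1; a²/(1 + a²))². -/

import Mathlib

open MeasureTheory Real Set intervalIntegral Finset

/-- The Gauss hypergeometric series `₂F₁(a,b;c;x)`. -/
noncomputable def twoF1 (a b c x : ℝ) : ℝ :=
  ∑' n : ℕ, ((ascPochhammer ℝ n).eval a * (ascPochhammer ℝ n).eval b) /
    ((ascPochhammer ℝ n).eval c * (n.factorial : ℝ)) * x ^ n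

noncomputable def W (c : ℝ) (n : ℕ) : ℝ := (ascPochhammer ℝ n).eval c / n.factorial

lemma W_zero (c : ℝ) : W c 0 = 1 := by simp [W]

lemma W_succ (c : ℝ) (n : ℕ) : W c (n + 1) = W c n * ((c + n) / (n + 1)) := by
  have h1 : ((n.factorial : ℝ)) ≠ 0 := Nat.cast_ne_zero.2 n.factorial_ne_zero
  have h2 : ((n : ℝ) + 1) ≠ 0 := by positivity
  simp only [W, ascPochhammer_succ_eval, Nat.factorial_succ, Nat.cast_mul, Nat.cast_add,
    Nat.cast_one]
  rw [div_mul_div_comm]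
  ring_nf

lemma W_pos {c : ℝ} (hc : 0 < c) (n : ℕ) : 0 < W c n := by
  induction n with
  | zero => simp [W_zero]
  | succ n ih =>
    rw [W_succ]
    have : (0:ℝ) < c + n := by positivity
    positivity

lemma W_le_one {c : ℝ} (hc : 0 < c) (hc1 : c ≤ 1) (n : ℕ) : W c n ≤ 1 := by
  induction n with
  | zero => simp [W_zero]
  | succ n ih =>
    rw [W_succ]
    have h : (c + n) / (n + 1) ≤ 1 := by
      rw [div_le_one (by positivity)]
      linarith
    calc W c n * ((c + n) / (n + 1)) ≤ 1 * 1 := by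
          apply mul_le_mul ih h (by positivity) zero_le_one
      _ = 1 := by ring

lemma twoF1_eq (p q x : ℝ) : twoF1 p q 1 x = ∑' n : ℕ, (W p n * W q n) * x ^ n := by
  unfold twoF1
  congr 1; funext n
  rw [ascPochhammer_eval_one, W, W]
  field_simp

lemma J_eq (n : ℕ) : (∫ x in (0:ℝ)..(π/2), Real.sin x ^ (2 * n)) = π / 2 * W (1/2) n := by
  induction n with
  | zero => simp [W_zero]
  | succ n ih =>
    have h : 2 * (n + 1) = 2 * n + 2 := by ring
    rw [h, integral_sin_pow, ih, W_succ]
    simp only [Real.cos_pi_div_two, Real.sin_zero, mul_zero, zero_mul, sub_zero, zero_sub,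
      ne_eq, zero_pow, neg_zero, zero_div, zero_add, mul_one]
    have h1 : ((2:ℝ) * n + 2) ≠ 0 := by positivity
    have h2 : ((n:ℝ) + 1) ≠ 0 := by positivity
    push_cast
    field_simp
    ring

lemma sq_sin_image : (fun x : ℝ => Real.sin x ^ 2) '' Ioo 0 (π/2) = Ioo (0:ℝ) 1 := by
  apply Set.eq_of_subset_of_subset
  · rintro _ ⟨x, hx, rfl⟩
    have h1 : 0 < Real.sin x := Real.sin_pos_of_pos_of_lt_pi hx.1 (lt_trans hx.2 (by linarith [pi_pos]))
    have h2 : Real.sin x < 1 := by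
      have := Real.cos_pos_of_mem_Ioo ⟨by linarith [pi_pos, hx.1], hx.2⟩
      nlinarith [Real.sin_sq_add_cos_sq x]
    refine ⟨by positivity, ?_⟩
    simp only
    nlinarith
  · rintro y ⟨hy0, hy1⟩
    have hs0 : 0 < Real.sqrt y := Real.sqrt_pos.2 hy0
    have hs1 : Real.sqrt y < 1 := by
      rw [show (1:ℝ) = Real.sqrt 1 by simp]
      exact Real.sqrt_lt_sqrt (le_of_lt hy0) hy1
    refine ⟨Real.arcsin (Real.sqrt y), ⟨Real.arcsin_pos.2 hs0, ?_⟩, ?_⟩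
    · exact Real.arcsin_lt_pi_div_two.2 hs1
    · simp only
      rw [Real.sin_arcsin (by linarith) (by linarith), Real.sq_sqrt (le_of_lt hy0)]

lemma sq_sin_injOn : Set.InjOn (fun x : ℝ => Real.sin x ^ 2) (Ioo 0 (π/2)) := by
  intro x hx y hy hxy
  have hmono := Real.strictMonoOn_sin
  have hx' : x ∈ Icc (-(π/2)) (π/2) := ⟨by linarith [hx.1, pi_pos], le_of_lt hx.2⟩
  have hy' : y ∈ Icc (-(π/2)) (π/2) := ⟨by linarith [hy.1, pi_pos], le_of_lt hy.2⟩
  have h1 : 0 < Real.sin x := Real.sin_pos_of_pos_of_lt_pi hx.1 (lt_trans hx.2 (by linarith [pi_pos]))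
  have h2 : 0 < Real.sin y := Real.sin_pos_of_pos_of_lt_pi hy.1 (lt_trans hy.2 (by linarith [pi_pos]))
  have : Real.sin x = Real.sin y := by
    have hxy' : Real.sin x ^ 2 = Real.sin y ^ 2 := hxy
    nlinarith
  exact hmono.injOn hx' hy' this

lemma sq_sin_deriv {x : ℝ} :
    HasDerivWithinAt (fun x : ℝ => Real.sin x ^ 2) (2 * Real.sin x * Real.cos x) (Ioo 0 (π/2)) x := by
  have : HasDerivAt (fun x : ℝ => Real.sin x ^ 2) (2 * Real.sin x ^ 1 * Real.cos x) x := by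
    simpa using (Real.hasDerivAt_sin x).fun_pow 2
  simpa using this.hasDerivWithinAt

lemma smul_eq_on {n : ℕ} {x : ℝ} (hx : x ∈ Ioo 0 (π/2)) :
    |2 * Real.sin x * Real.cos x| •
      ((fun t : ℝ => t ^ n * (t * (1 - t)) ^ (-(1/2) : ℝ)) (Real.sin x ^ 2))
    = 2 * Real.sin x ^ (2 * n) := by
  have h1 : 0 < Real.sin x := Real.sin_pos_of_pos_of_lt_pi hx.1 (lt_trans hx.2 (by linarith [pi_pos]))
  have h2 : 0 < Real.cos x := Real.cos_pos_of_mem_Ioo ⟨by linarith [pi_pos, hx.1], hx.2⟩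
  have hsc : 0 < Real.sin x * Real.cos x := mul_pos h1 h2
  have key : (Real.sin x ^ 2 * (1 - Real.sin x ^ 2)) ^ (-(1/2) : ℝ)
      = (Real.sin x * Real.cos x)⁻¹ := by
    have e1 : Real.sin x ^ 2 * (1 - Real.sin x ^ 2) = (Real.sin x * Real.cos x) ^ (2:ℕ) := by
      rw [← Real.cos_sq' x]; ring
    rw [e1, ← Real.rpow_natCast (Real.sin x * Real.cos x) 2,
      ← Real.rpow_mul hsc.le]
    rw [show ((2:ℕ):ℝ) * (-(1/2)) = -1 by norm_num, Real.rpow_neg_one]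
  simp only [smul_eq_mul, key, abs_of_pos (by positivity : (0:ℝ) < 2 * Real.sin x * Real.cos x)]
  rw [← pow_mul]
  field_simp

lemma beta_eq (n : ℕ) :
    (∫ t in Ioo (0:ℝ) 1, t ^ n * (t * (1 - t)) ^ (-(1/2) : ℝ)) = π * W (1/2) n := by
  have := MeasureTheory.integral_image_eq_integral_abs_deriv_smul measurableSet_Ioo
    (fun x _ => sq_sin_deriv) sq_sin_injOn
    (fun t : ℝ => t ^ n * (t * (1 - t)) ^ (-(1/2) : ℝ))
  rw [sq_sin_image] at this
  rw [this, MeasureTheory.setIntegral_congr_fun measurableSet_Ioo (fun x hx => smul_eq_on hx)]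
  rw [← MeasureTheory.integral_Ioc_eq_integral_Ioo,
    ← intervalIntegral.integral_of_le (by positivity : (0:ℝ) ≤ π/2)]
  rw [intervalIntegral.integral_const_mul, J_eq]
  ring

lemma beta_integrable (n : ℕ) :
    IntegrableOn (fun t : ℝ => t ^ n * (t * (1 - t)) ^ (-(1/2) : ℝ)) (Ioo (0:ℝ) 1) := by
  have := MeasureTheory.integrableOn_image_iff_integrableOn_abs_deriv_smul measurableSet_Ioo
    (fun x (_ : x ∈ Ioo (0:ℝ) (π/2)) => sq_sin_deriv) sq_sin_injOn
    (fun t : ℝ => t ^ n * (t * (1 - t)) ^ (-(1/2) : ℝ))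
  rw [sq_sin_image] at this
  rw [this]
  have : IntegrableOn (fun x : ℝ => 2 * Real.sin x ^ (2 * n)) (Ioo (0:ℝ) (π/2)) :=
    ((Continuous.integrableOn_Icc (by fun_prop)).mono_set Ioo_subset_Icc_self)
  exact this.congr_fun (fun x hx => (smul_eq_on hx).symm) measurableSet_Ioo

lemma Whalf_pos (n : ℕ) : 0 < W (1/2) n := W_pos (by norm_num) n
lemma Whalf_le_one (n : ℕ) : W (1/2) n ≤ 1 := W_le_one (by norm_num) (by norm_num) n

lemma series_int (y : ℝ) (hy0 : 0 ≤ y) (hy1 : y < 1) :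
    (∫ t in Ioo (0:ℝ) 1, twoF1 (1/2) (1/2) 1 (y * t) * (t * (1 - t)) ^ (-(1/2) : ℝ))
      = π * ∑' n : ℕ, (W (1/2) n) ^ 3 * y ^ n := by
  set F : ℕ → ℝ → ℝ :=
    fun n t => ((W (1/2) n) ^ 2 * y ^ n) * (t ^ n * (t * (1 - t)) ^ (-(1/2) : ℝ)) with hF
  have hptwise : ∀ t : ℝ, t ∈ Ioo (0:ℝ) 1 →
      twoF1 (1/2) (1/2) 1 (y * t) * (t * (1 - t)) ^ (-(1/2) : ℝ) = ∑' n : ℕ, F n t := by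
    intro t _
    rw [twoF1_eq, ← tsum_mul_right]
    congr 1; funext n
    rw [hF]; simp only
    rw [mul_pow]; ring
  rw [MeasureTheory.setIntegral_congr_fun measurableSet_Ioo hptwise]
  have hint : ∀ n : ℕ, Integrable (F n) (volume.restrict (Ioo (0:ℝ) 1)) :=
    fun n => (beta_integrable n).const_mul _
  have hnorm : ∀ n : ℕ, (∫ t in Ioo (0:ℝ) 1, ‖F n t‖)
      = ((W (1/2) n) ^ 2 * y ^ n) * (π * W (1/2) n) := by
    intro n
    have : ∀ t : ℝ, t ∈ Ioo (0:ℝ) 1 → ‖F n t‖ = F n t := by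
      intro t ht
      apply Real.norm_of_nonneg
      have h1 : (0:ℝ) ≤ t := ht.1.le
      have h3 : (0:ℝ) ≤ t * (1 - t) := by nlinarith [ht.1, ht.2]
      have := Whalf_pos n
      positivity
    rw [MeasureTheory.setIntegral_congr_fun measurableSet_Ioo this, hF]
    simp only
    rw [MeasureTheory.integral_const_mul, beta_eq]
  have hsum : Summable fun n : ℕ => ∫ t in Ioo (0:ℝ) 1, ‖F n t‖ := by
    refine Summable.of_nonneg_of_le ?_ ?_ ((summable_geometric_of_lt_one hy0 hy1).mul_left π)
    · intro n; rw [hnorm n]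
      have := Whalf_pos n
      positivity
    · intro n; rw [hnorm n]
      have h1 := Whalf_pos n
      have h2 := Whalf_le_one n
      have h3 : (W (1/2) n) ^ 3 ≤ 1 := pow_le_one₀ h1.le h2
      calc (W (1/2) n) ^ 2 * y ^ n * (π * W (1/2) n) = π * y ^ n * (W (1/2) n) ^ 3 := by ring
        _ ≤ π * y ^ n * 1 := by
            apply mul_le_mul_of_nonneg_left h3 (by positivity)
        _ = π * y ^ n := by ring
  rw [← MeasureTheory.integral_tsum_of_summable_integral_norm hint hsum]
  have : ∀ n : ℕ, (∫ t in Ioo (0:ℝ) 1, F n t) = π * ((W (1/2) n) ^ 3 * y ^ n) := by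
    intro n
    rw [hF]; simp only
    rw [MeasureTheory.integral_const_mul, beta_eq]
    ring
  rw [tsum_congr this, tsum_mul_left]

noncomputable def q (k : ℕ) : ℝ := (W (1/4) k) ^ 2

lemma q_zero : q 0 = 1 := by simp [q, W_zero]

lemma q_succ (k : ℕ) : q (k + 1) = q k * ((1/4 + k) / (k + 1)) ^ 2 := by
  rw [q, q, W_succ, mul_pow]

lemma key_identity (n k : ℕ) (hk : k ≤ n) :
    8 * ((n:ℝ) + 1) ^ 3 * (q k * q (n + 1 - k)) - (2 * n + 1) ^ 3 * (q k * q (n - k))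
      = (8 * ((k:ℝ) + 1) ^ 2 * (2 * (k + 1) - 3 * n - 3) * (q (k + 1) * q (n + 1 - (k + 1))))
        - 8 * (k:ℝ) ^ 2 * (2 * k - 3 * n - 3) * (q k * q (n + 1 - k)) := by
  obtain ⟨m, rfl⟩ : ∃ m, n = k + m := ⟨n - k, (Nat.add_sub_cancel' hk).symm⟩
  have e1 : k + m + 1 - k = m + 1 := by omega
  have e2 : k + m - k = m := by omega
  have e3 : k + m + 1 - (k + 1) = m := by omega
  rw [e1, e2, e3, q_succ, q_succ]
  have hk1 : ((k:ℝ) + 1) ≠ 0 := by positivity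
  have hm1 : ((m:ℝ) + 1) ≠ 0 := by positivity
  push_cast
  field_simp
  ring

lemma clausen_sum (n : ℕ) : ∑ k ∈ range (n + 1), q k * q (n - k) = (W (1/2) n) ^ 3 := by
  induction n with
  | zero => simp [q_zero, W_zero]
  | succ n ih =>
    set g : ℕ → ℝ := fun k => 8 * (k:ℝ) ^ 2 * (2 * k - 3 * n - 3) * (q k * q (n + 1 - k)) with hg
    have key : ∀ k ∈ range (n + 1),
        8 * ((n:ℝ) + 1) ^ 3 * (q k * q (n + 1 - k)) - (2 * n + 1) ^ 3 * (q k * q (n - k))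
          = g (k + 1) - g k := by
      intro k hk
      have hkn : k ≤ n := Nat.lt_succ_iff.mp (mem_range.mp hk)
      rw [key_identity n k hkn]
      simp only [hg]
      push_cast
      ring
    have h1 : ∑ k ∈ range (n + 1),
        (8 * ((n:ℝ) + 1) ^ 3 * (q k * q (n + 1 - k)) - (2 * n + 1) ^ 3 * (q k * q (n - k)))
        = g (n + 1) - g 0 := by
      rw [Finset.sum_congr rfl key]
      exact Finset.sum_range_sub g (n + 1)
    rw [Finset.sum_sub_distrib, ← Finset.mul_sum, ← Finset.mul_sum, ih] at h1
    have hg0 : g 0 = 0 := by simp [hg]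
    have hgn : g (n + 1) = -(8 * ((n:ℝ) + 1) ^ 3) * (q (n + 1) * q 0) := by
      simp only [hg, Nat.add_sub_cancel, Nat.sub_self]
      push_cast
      ring
    rw [hg0, hgn, sub_zero] at h1
    have hpos : (8 * ((n:ℝ) + 1) ^ 3) ≠ 0 := by positivity
    apply mul_left_cancel₀ hpos
    rw [Finset.sum_range_succ, Nat.sub_self]
    have lhs_eq : 8 * ((n:ℝ) + 1) ^ 3 *
        ((∑ k ∈ range (n + 1), q k * q (n + 1 - k)) + q (n + 1) * q 0)
        = (2 * (n:ℝ) + 1) ^ 3 * (W (1/2) n) ^ 3 := by linarith [h1]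
    rw [lhs_eq, W_succ]
    have hn1 : ((n:ℝ) + 1) ≠ 0 := by positivity
    field_simp
    ring

lemma clausen (y : ℝ) (hy0 : 0 ≤ y) (hy1 : y < 1) :
    (twoF1 (1/4) (1/4) 1 y) ^ 2 = ∑' n : ℕ, (W (1/2) n) ^ 3 * y ^ n := by
  have hq : ∀ k, 0 < q k := fun k => by
    have := W_pos (show (0:ℝ) < 1/4 by norm_num) k
    simp only [q]; positivity
  have hq1 : ∀ k, q k ≤ 1 := fun k => by
    have h1 := W_pos (show (0:ℝ) < 1/4 by norm_num) k
    have h2 := W_le_one (show (0:ℝ) < 1/4 by norm_num) (by norm_num) k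
    calc q k = (W (1/4) k) ^ 2 := rfl
      _ ≤ 1 ^ 2 := by apply pow_le_pow_left₀ h1.le h2
      _ = 1 := one_pow 2
  have hf : twoF1 (1/4) (1/4) 1 y = ∑' n : ℕ, q n * y ^ n := by
    rw [twoF1_eq]
    exact tsum_congr fun n => by rw [q, sq]
  have hsumm : Summable fun n : ℕ => ‖q n * y ^ n‖ := by
    refine Summable.of_nonneg_of_le (fun n => norm_nonneg _) (fun n => ?_)
      (summable_geometric_of_lt_one hy0 hy1)
    rw [Real.norm_of_nonneg (by have := hq n; positivity)]
    have : (0:ℝ) ≤ y ^ n := by positivity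
    nlinarith [hq n, hq1 n]
  rw [hf, sq, tsum_mul_tsum_eq_tsum_sum_antidiagonal_of_summable_norm hsumm hsumm]
  apply tsum_congr
  intro n
  rw [Finset.Nat.sum_antidiagonal_eq_sum_range_succ (f := fun i j => (q i * y ^ i) * (q j * y ^ j))]
  rw [← clausen_sum n, Finset.sum_mul]
  apply Finset.sum_congr rfl
  intro k hk
  have hkn : k ≤ n := Nat.lt_succ_iff.mp (mem_range.mp hk)
  have : y ^ k * y ^ (n - k) = y ^ n := by
    rw [← pow_add]; congr 1; omega
  calc q k * y ^ k * (q (n - k) * y ^ (n - k)) = q k * q (n - k) * (y ^ k * y ^ (n - k)) := by ring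
    _ = q k * q (n - k) * y ^ n := by rw [this]

/-- For `a > 0`,
`(1/π) ∫₀¹ (1+a²u)⁻¹ ₂F₁(1/2,1/2;1;a²u/(1+a²u)) (u(1-u))^{-1/2} du
  = (1+a²)^{-1/2} ₂F₁(1/4,1/4;1;a²/(1+a²))²`. -/
theorem integral_eq_twoF1_sq (a : ℝ) (ha : 0 < a) :
    (1 / Real.pi) * ∫ u in (0:ℝ)..1, (1 + a ^ 2 * u)⁻¹ *
        twoF1 (1/2) (1/2) 1 (a ^ 2 * u / (1 + a ^ 2 * u)) * (u * (1 - u)) ^ (-(1/2) : ℝ)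
      = (1 + a ^ 2) ^ (-(1/2) : ℝ) *
          (twoF1 (1/4) (1/4) 1 (a ^ 2 / (1 + a ^ 2))) ^ 2 := by
  set A : ℝ := 1 + a ^ 2 with hA
  have hA0 : (0:ℝ) < A := by rw [hA]; positivity
  have hAne : A ≠ 0 := hA0.ne'
  set z : ℝ := a ^ 2 / A with hz
  have hz0 : 0 < z := by rw [hz]; positivity
  have hz1 : z < 1 := by
    rw [hz, div_lt_one hA0, hA]; nlinarith [sq_nonneg a]
  have hAz : A * z = a ^ 2 := by rw [hz]; field_simp
  have ha2 : a ^ 2 = A * z := hAz.symm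
  clear_value z
  clear hz
  simp only [ha2]
  clear_value A
  rw [ha2] at hA
  clear hAz ha2 ha a
  have hAz1 : A * z = A - 1 := by linarith [hA]
  -- now pure: A > 0, 0 < z < 1
  set φ : ℝ → ℝ := fun t => t / (A * (1 - z * t)) with hφ
  set φ' : ℝ → ℝ := fun t => A / (A * (1 - z * t)) ^ 2 with hφ'
  set G : ℝ → ℝ := fun u => (1 + A * z * u)⁻¹ *
      twoF1 (1/2) (1/2) 1 (A * z * u / (1 + A * z * u)) * (u * (1 - u)) ^ (-(1/2) : ℝ) with hG
  have hD : ∀ t : ℝ, t ∈ Ioo (0:ℝ) 1 → 0 < 1 - z * t := by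
    intro t ht
    have : z * t < z * 1 := mul_lt_mul_of_pos_left ht.2 hz0
    nlinarith [ht.1]
  have hden1 : ∀ u : ℝ, u ∈ Ioo (0:ℝ) 1 → 0 < 1 + A * z * u := by
    intro u hu
    nlinarith [hu.1, mul_pos hA0 hz0]
  have he1 : ∀ t ∈ Ioo (0:ℝ) 1, 1 + A * z * (t / (A * (1 - z * t))) = (1 - z * t)⁻¹ := by
    intro t ht
    have hDt := hD t ht
    have hDne : (1 - z * t) ≠ 0 := hDt.ne'
    have h3 : A * z * (t / (A * (1 - z * t))) = z * t / (1 - z * t) := by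
      rw [eq_div_iff hDne]
      field_simp
      try ring
    rw [h3, add_div' _ _ _ hDne, show (1:ℝ) * (1 - z * t) + z * t = 1 by ring, one_div]
  -- image
  have himage : φ '' Ioo 0 1 = Ioo (0:ℝ) 1 := by
    apply Set.eq_of_subset_of_subset
    · rintro _ ⟨t, ht, rfl⟩
      have hDt := hD t ht
      have hADpos : 0 < A * (1 - z * t) := mul_pos hA0 hDt
      refine ⟨div_pos ht.1 hADpos, ?_⟩
      rw [hφ]; simp only
      rw [div_lt_one hADpos]
      have h5 : A * z * t = (A - 1) * t := by rw [hAz1]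
      nlinarith [mul_pos (sub_pos.2 ht.2) hA0]
    · rintro u hu
      have h1 := hden1 u hu
      refine ⟨A * u / (1 + A * z * u), ⟨?_, ?_⟩, ?_⟩
      · exact div_pos (mul_pos hA0 hu.1) h1
      · rw [div_lt_one h1]
        have h5 : A * z * u = (A - 1) * u := by rw [hAz1]
        nlinarith [hu.1, hu.2]
      · rw [hφ]; simp only
        have h2 : 1 - z * (A * u / (1 + A * z * u)) = 1 / (1 + A * z * u) := by
          rw [eq_div_iff h1.ne', sub_mul, mul_assoc z, div_mul_cancel₀ _ h1.ne']
          ring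
        rw [h2]
        rw [mul_one_div, div_div_div_cancel_right₀]
        · exact mul_div_cancel_left₀ u hAne
        · exact h1.ne'
  -- injectivity
  have hinj : Set.InjOn φ (Ioo 0 1) := by
    apply Set.LeftInvOn.injOn (f₁' := fun u => A * u / (1 + A * z * u))
    intro t ht
    have hDt := hD t ht
    have hADne : A * (1 - z * t) ≠ 0 := (mul_pos hA0 hDt).ne'
    simp only [hφ]
    rw [he1 t ht, div_inv_eq_mul, mul_div_assoc', mul_div_mul_left _ _ hAne,
      div_mul_cancel₀ _ hDt.ne']
  -- derivative
  have hderiv : ∀ t ∈ Ioo (0:ℝ) 1, HasDerivWithinAt φ (φ' t) (Ioo 0 1) t := by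
    intro t ht
    have hDt := hD t ht
    have hADne : A * (1 - z * t) ≠ 0 := (mul_pos hA0 hDt).ne'
    have h1 : HasDerivAt (fun t : ℝ => A * (1 - z * t)) (A * (-z)) t := by
      have : HasDerivAt (fun t : ℝ => 1 - z * t) (-z) t := by
        simpa using ((hasDerivAt_id t).const_mul z).const_sub 1
      simpa using this.const_mul A
    have h2 : HasDerivAt φ ((1 * (A * (1 - z * t)) - t * (A * (-z))) / (A * (1 - z * t)) ^ 2) t :=
      (hasDerivAt_id t).div h1 hADne
    have h3 : (1 * (A * (1 - z * t)) - t * (A * (-z))) / (A * (1 - z * t)) ^ 2 = φ' t := by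
      rw [hφ']; simp only
      congr 1
      ring
    rw [h3] at h2
    exact h2.hasDerivWithinAt
  -- pointwise identity
  have hpt : ∀ t ∈ Ioo (0:ℝ) 1, |φ' t| • G (φ t)
      = A ^ (-(1/2) : ℝ) * (twoF1 (1/2) (1/2) 1 (z * t) * (t * (1 - t)) ^ (-(1/2) : ℝ)) := by
    intro t ht
    have hDt := hD t ht
    have hADpos : 0 < A * (1 - z * t) := mul_pos hA0 hDt
    have hADne : A * (1 - z * t) ≠ 0 := hADpos.ne'
    have e1 : 1 + A * z * φ t = (1 - z * t)⁻¹ := by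
      rw [hφ]; simp only
      exact he1 t ht
    have e2 : A * z * φ t / (1 + A * z * φ t) = z * t := by
      rw [e1, hφ]; simp only
      field_simp
    have e3 : φ t * (1 - φ t) = (t * (1 - t)) * (A * (1 - z * t) ^ 2)⁻¹ := by
      rw [hφ]; simp only
      have hnum : A * (1 - z * t) - t = A * (1 - t) := by
        have h5 : A * z * t = (A - 1) * t := by rw [hAz1]
        nlinarith [h5]
      rw [one_sub_div hADne, hnum, div_mul_div_comm, ← div_eq_mul_inv,
        div_eq_div_iff (mul_ne_zero hADne hADne) (mul_pos hA0 (pow_pos hDt 2)).ne']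
      ring
    have hx : (0:ℝ) < A * (1 - z * t) ^ 2 := mul_pos hA0 (pow_pos hDt 2)
    have e4a : ((A * (1 - z * t) ^ 2)⁻¹ : ℝ) ^ (-(1/2) : ℝ)
        = (A * (1 - z * t) ^ 2) ^ ((1:ℝ)/2) := by
      rw [← Real.rpow_neg_one (A * (1 - z * t) ^ 2), ← Real.rpow_mul hx.le]
      norm_num
    have e4b : (A * (1 - z * t) ^ 2) ^ ((1:ℝ)/2) = A ^ ((1:ℝ)/2) * (1 - z * t) := by
      rw [Real.mul_rpow hA0.le (pow_pos hDt 2).le, ← Real.rpow_natCast (1 - z * t) 2,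
        ← Real.rpow_mul hDt.le]
      norm_num
    have e4 : (φ t * (1 - φ t)) ^ (-(1/2) : ℝ)
        = (t * (1 - t)) ^ (-(1/2) : ℝ) * (A ^ ((1:ℝ)/2) * (1 - z * t)) := by
      rw [e3, Real.mul_rpow (by nlinarith [ht.1, ht.2]) (inv_nonneg.2 hx.le), e4a, e4b]
    have hpow : A ^ ((1:ℝ)/2) = A ^ (-(1/2) : ℝ) * A := by
      rw [← Real.rpow_add_one hAne (-(1/2))]
      norm_num
    have habs : |φ' t| = A / (A * (1 - z * t)) ^ 2 := by
      rw [hφ']; simp only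
      exact abs_of_pos (div_pos hA0 (pow_pos hADpos 2))
    rw [smul_eq_mul, habs, hG]; simp only
    rw [e2, e1, inv_inv, e4, hpow]
    field_simp
  -- assembly
  have key := MeasureTheory.integral_image_eq_integral_abs_deriv_smul measurableSet_Ioo
    hderiv hinj G
  rw [himage] at key
  have hiv : (∫ u in (0:ℝ)..1, G u) = ∫ u in Ioo (0:ℝ) 1, G u := by
    rw [intervalIntegral.integral_of_le zero_le_one, MeasureTheory.integral_Ioc_eq_integral_Ioo]
  rw [hiv, key, MeasureTheory.setIntegral_congr_fun measurableSet_Ioo hpt,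
    MeasureTheory.integral_const_mul, series_int z hz0.le hz1, ← clausen z hz0.le hz1]
  have hπ : π ≠ 0 := pi_ne_zero
  field_simp
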